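/- arXiv:2410.21646 — 2 statements merged into one kernel-verified Lean document; each statement's English description precedes it below -/
import Mathlib

section
/- If p is a prime with p ≡ 1 (mod 3), then there exist integers A and B such that 4p = A² + 27B². -/
-- square mod 4
lemma sq_mod_four (a : ℤ) : a ^ 2 % 4 = 0 ∨ a ^ 2 % 4 = 1 := by
  rcases Int.even_or_odd a with ⟨r, hr⟩ | ⟨r, hr⟩
  · left
    have h : a ^ 2 = 4 * (r * r) := by subst hr; ring
    rw [h]; exact Int.mul_emod_right 4 _
  · right
    have h : a ^ 2 = 4 * (r * r + r) + 1 := by subst hr; ring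
    set k := r * r + r
    omega

-- existence of sqrt(-3) mod p
lemma exists_sqrt_neg3 (p : ℕ) (hp : p.Prime) (h3 : p % 3 = 1) :
    ∃ c : ZMod p, c ^ 2 = -3 := by
  haveI : Fact p.Prime := ⟨hp⟩
  have hdvd : 3 ∣ Fintype.card (ZMod p)ˣ := by
    rw [ZMod.card_units_eq_totient, Nat.totient_prime hp]
    omega
  obtain ⟨g, hg⟩ := exists_prime_orderOf_dvd_card 3 hdvd
  set ω : ZMod p := (g : ZMod p) with hω
  have hg3 : g ^ 3 = 1 := by rw [← hg]; exact pow_orderOf_eq_one g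
  have hω3 : ω ^ 3 = 1 := by
    have := congrArg (Units.val) hg3
    push_cast at this
    simpa [hω] using this
  have hωne : ω ≠ 1 := by
    intro h
    have : g = 1 := by
      apply Units.ext
      simpa [hω] using h
    rw [this, orderOf_one] at hg
    omega
  have hkey : ω ^ 2 + ω + 1 = 0 := by
    have hfac : (ω - 1) * (ω ^ 2 + ω + 1) = 0 := by
      have : (ω - 1) * (ω ^ 2 + ω + 1) = ω ^ 3 - 1 := by ring
      rw [this, hω3]; ring
    rcases mul_eq_zero.mp hfac with h | h
    · exact absurd (by linear_combination h) hωne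
    · exact h
  refine ⟨2 * ω + 1, ?_⟩
  linear_combination 4 * hkey

-- p = x^2 + 3y^2
set_option maxHeartbeats 1000000 in
lemma prime_eq_sq_add_three_sq (p : ℕ) (hp : p.Prime) (h3 : p % 3 = 1) :
    ∃ x y : ℤ, (p : ℤ) = x ^ 2 + 3 * y ^ 2 := by
  haveI : Fact p.Prime := ⟨hp⟩
  obtain ⟨c, hc⟩ := exists_sqrt_neg3 p hp h3
  set N := Nat.sqrt p with hN
  have hN2 : N ^ 2 < p := by
    have h1 : N ^ 2 ≤ p := Nat.sqrt_le' p
    have h2 : N ^ 2 ≠ p := by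
      intro h
      have hd : N ∣ p := ⟨N, by rw [← h]; ring⟩
      rcases (Nat.Prime.eq_one_or_self_of_dvd hp N hd) with h1' | h1'
      · rw [h1'] at h; simp at h; have := hp.two_le; omega
      · rw [h1'] at h; have := hp.two_le; nlinarith
    omega
  -- pigeonhole
  set s : Finset (ℕ × ℕ) := Finset.range (N + 1) ×ˢ Finset.range (N + 1) with hs
  have hcard : Fintype.card (ZMod p) < s.card := by
    rw [hs, Finset.card_product, Finset.card_range, ZMod.card]
    exact Nat.lt_succ_sqrt p
  obtain ⟨⟨x1, y1⟩, hm1, ⟨x2, y2⟩, hm2, hne, heq⟩ :=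
    Finset.exists_ne_map_eq_of_card_lt_of_maps_to hcard
      (f := fun q : ℕ × ℕ => (q.1 : ZMod p) + c * q.2)
      (fun a _ => Finset.mem_univ _)
  simp only [hs, Finset.mem_product, Finset.mem_range] at hm1 hm2
  set a : ℤ := (x1 : ℤ) - x2 with ha
  set b : ℤ := (y1 : ℤ) - y2 with hb
  have hap : a ^ 2 < p := by
    have h1 : a ≤ N := by omega
    have h2 : -(N : ℤ) ≤ a := by omega
    nlinarith
  have hbp : b ^ 2 < p := by
    have h1 : b ≤ N := by omega
    have h2 : -(N : ℤ) ≤ b := by omega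
    nlinarith
  have hzero : (a : ZMod p) + c * b = 0 := by
    have : (x1 : ZMod p) + c * y1 = (x2 : ZMod p) + c * y2 := heq
    push_cast [ha, hb]
    linear_combination this
  have hdvd : (p : ℤ) ∣ a ^ 2 + 3 * b ^ 2 := by
    rw [← ZMod.intCast_zmod_eq_zero_iff_dvd]
    push_cast
    have hab : (a : ZMod p) = -(c * b) := by linear_combination hzero
    rw [hab]
    linear_combination (b : ZMod p) ^ 2 * hc
  have hpos : 0 < a ^ 2 + 3 * b ^ 2 := by
    rcases lt_or_eq_of_le (by positivity : (0:ℤ) ≤ a ^ 2 + 3 * b ^ 2) with h | h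
    · exact h
    · exfalso
      have ha0 : a = 0 := by nlinarith
      have hb0 : b = 0 := by nlinarith
      apply hne
      have : x1 = x2 := by omega
      have : y1 = y2 := by omega
      simp_all
  have hlt : a ^ 2 + 3 * b ^ 2 < 4 * p := by linarith
  obtain ⟨k, hk⟩ := hdvd
  have hppos : (0:ℤ) < p := by exact_mod_cast hp.pos
  have hk1 : 1 ≤ k := by
    by_contra h
    push_neg at h
    have hk0 : k ≤ 0 := by omega
    have : (p : ℤ) * k ≤ 0 := mul_nonpos_of_nonneg_of_nonpos (le_of_lt hppos) hk0
    omega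
  have hk3 : k ≤ 3 := by
    have h4 : (p : ℤ) * k < (p : ℤ) * 4 := by omega
    have := (mul_lt_mul_iff_right₀ hppos).mp h4
    omega
  interval_cases k
  · exact ⟨a, b, by linarith⟩
  · -- a^2 + 3b^2 = 2p impossible mod 4
    exfalso
    have hpodd : p % 2 = 1 := by
      rcases hp.eq_two_or_odd with h | h
      · omega
      · exact h
    have ha4 := sq_mod_four a
    have hb4 := sq_mod_four b
    have hk' : a ^ 2 + 3 * b ^ 2 = (p : ℤ) * 2 := hk
    generalize hA : a ^ 2 = A at ha4 hk'
    generalize hB : b ^ 2 = B at hb4 hk'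
    omega
  · -- 3p case
    have h3a : (3:ℤ) ∣ a := by
      have h3sq : (3:ℤ) ∣ a ^ 2 := ⟨p - b ^ 2, by linarith⟩
      exact Int.Prime.dvd_pow' (by norm_num) h3sq
    obtain ⟨d, hd⟩ := h3a
    exact ⟨b, d, by nlinarith⟩

theorem four_p_eq_A2_27B2 (p : ℕ) (hp : p.Prime) (h3 : p % 3 = 1) :
    ∃ A B : ℤ, 4 * (p : ℤ) = A ^ 2 + 27 * B ^ 2 := by
  obtain ⟨x, y, hxy⟩ := prime_eq_sq_add_three_sq p hp h3
  have hx3 : ¬ (3:ℤ) ∣ x := by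
    intro ⟨u, hu⟩
    have : (3:ℤ) ∣ p := ⟨3 * u ^ 2 + y ^ 2, by subst hu; linarith [hxy]⟩
    have : (3:ℕ) ∣ p := by exact_mod_cast this
    omega
  have hx3' : x % 3 = 1 ∨ x % 3 = 2 := by omega
  have hcases : y % 3 = 0 ∨ (x - y) % 3 = 0 ∨ (x + y) % 3 = 0 := by omega
  rcases hcases with h | h | h
  · obtain ⟨d, hd⟩ : (3:ℤ) ∣ y := Int.dvd_of_emod_eq_zero h
    exact ⟨2 * x, 2 * d, by subst hd; linear_combination 4 * hxy⟩
  · obtain ⟨d, hd⟩ : (3:ℤ) ∣ (x - y) := Int.dvd_of_emod_eq_zero h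
    exact ⟨x + 3 * y, d, by linear_combination 4 * hxy + 3 * (x - y + 3 * d) * hd⟩
  · obtain ⟨d, hd⟩ : (3:ℤ) ∣ (x + y) := Int.dvd_of_emod_eq_zero h
    exact ⟨x - 3 * y, d, by linear_combination 4 * hxy + 3 * (x + y + 3 * d) * hd⟩
end

section
/- Let p be a prime with p ≡ 1 (mod 3). Then the congruence x³ ≡ 2 (mod p) is solvable if and only if there exist integers C and D such that p = C² + 27D². -/
open Complex Polynomial Finset

namespace CubicTwoAux

lemma omega_sq (ω : ℂ) (hω : IsPrimitiveRoot ω 3) : ω^2 + ω + 1 = 0 := by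
  have h3 : ω^3 = 1 := hω.pow_eq_one
  have h1 : ω ≠ 1 := hω.ne_one (by norm_num)
  have : (ω - 1) * (ω^2 + ω + 1) = 0 := by linear_combination h3
  rcases mul_eq_zero.mp this with h | h
  · exact absurd (sub_eq_zero.mp h) h1
  · exact h

lemma omega_conj (ω : ℂ) (hω : IsPrimitiveRoot ω 3) :
    (starRingEnd ℂ) ω = -1 - ω := by
  have h2 : ω^2 + ω + 1 = 0 := omega_sq ω hω
  have h2' : ((starRingEnd ℂ) ω)^2 + (starRingEnd ℂ) ω + 1 = 0 := by
    have := congrArg (starRingEnd ℂ) h2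
    simpa using this
  have hfac : ((starRingEnd ℂ) ω - ω) * ((starRingEnd ℂ) ω - (-1 - ω)) = 0 := by
    linear_combination h2' - h2
  rcases mul_eq_zero.mp hfac with h | h
  · exfalso
    have hre : ω = (ω.re : ℂ) := by
      have := sub_eq_zero.mp h
      exact (Complex.conj_eq_iff_re.mp this).symm
    rw [hre] at h2
    have : (ω.re^2 + ω.re + 1 : ℝ) = 0 := by exact_mod_cast h2
    nlinarith [sq_nonneg (ω.re + 1/2)]
  · exact sub_eq_zero.mp h

lemma omega_integral (ω : ℂ) (hω : IsPrimitiveRoot ω 3) : IsIntegral ℤ ω := by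
  refine ⟨X^3 - 1, ?_, ?_⟩
  · simpa using monic_X_pow_sub_C (1 : ℤ) (by norm_num : 3 ≠ 0)
  · simp [hω.pow_eq_one]

lemma mem_adjoin_integral (ω : ℂ) (hω : IsPrimitiveRoot ω 3) {z : ℂ}
    (hz : z ∈ Algebra.adjoin ℤ {ω}) : IsIntegral ℤ z :=
  IsIntegral.of_mem_of_fg _ (omega_integral ω hω).fg_adjoin_singleton z hz

lemma adjoin_coords (ω : ℂ) (hω : IsPrimitiveRoot ω 3) {z : ℂ}
    (hz : z ∈ Algebra.adjoin ℤ {ω}) : ∃ a b : ℤ, z = (a : ℂ) + (b : ℂ) * ω := by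
  have hsq : ω^2 = -1 - ω := by linear_combination omega_sq ω hω
  induction hz using Algebra.adjoin_induction with
  | mem x hx =>
    rcases hx with rfl
    exact ⟨0, 1, by simp⟩
  | algebraMap r => exact ⟨r, 0, by simp⟩
  | add x y _ _ hx hy =>
    obtain ⟨a, b, rfl⟩ := hx
    obtain ⟨c, d, rfl⟩ := hy
    exact ⟨a + c, b + d, by push_cast; ring⟩
  | mul x y _ _ hx hy =>
    obtain ⟨a, b, rfl⟩ := hx
    obtain ⟨c, d, rfl⟩ := hy
    exact ⟨a * c - b * d, a * d + b * c - b * d, by push_cast; linear_combination (b:ℂ)*d*hsq⟩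

lemma rat_integral_int {q : ℚ} (h : IsIntegral ℤ (q : ℂ)) : ∃ z : ℤ, (z : ℚ) = q := by
  have h2 : IsIntegral ℤ q :=
    (isIntegral_algHom_iff ((algebraMap ℚ ℂ).toIntAlgHom)
      (algebraMap ℚ ℂ).injective (x := q)).mp (by simpa using h)
  exact IsIntegrallyClosed.isIntegral_iff.mp h2

lemma mod4_lemma (c d : ℤ) (h : (4:ℤ) ∣ c^2 - c*d + d^2) : 2 ∣ c ∧ 2 ∣ d := by
  have key : ∀ x y : ZMod 4, x^2 - x*y + y^2 = 0 → (x = 0 ∨ x = 2) ∧ (y = 0 ∨ y = 2) := by decide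
  have h4 : ((c^2 - c*d + d^2 : ℤ) : ZMod 4) = 0 := by
    exact_mod_cast (ZMod.intCast_zmod_eq_zero_iff_dvd _ 4).mpr h
  have h4' : ((c : ZMod 4))^2 - (c:ZMod 4)*(d:ZMod 4) + (d:ZMod 4)^2 = 0 := by
    push_cast at h4; exact h4
  obtain ⟨hc, hd⟩ := key _ _ h4'
  constructor
  · rcases hc with h' | h'
    · have := (ZMod.intCast_zmod_eq_zero_iff_dvd c 4).mp h'; omega
    · have : (c : ZMod 4) = ((2:ℤ) : ZMod 4) := by exact_mod_cast h'
      have := (ZMod.intCast_eq_intCast_iff' _ _ _).mp this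
      simp [Int.ModEq] at this; omega
  · rcases hd with h' | h'
    · have := (ZMod.intCast_zmod_eq_zero_iff_dvd d 4).mp h'; omega
    · have : (d : ZMod 4) = ((2:ℤ) : ZMod 4) := by exact_mod_cast h'
      have := (ZMod.intCast_eq_intCast_iff' _ _ _).mp this
      simp [Int.ModEq] at this; omega

lemma mod9_lemma (c d : ℤ) (h : (9:ℤ) ∣ c^2 - c*d + d^2) : 3 ∣ c ∧ 3 ∣ d := by
  have key : ∀ x y : ZMod 9, x^2 - x*y + y^2 = 0 →
      (x = 0 ∨ x = 3 ∨ x = 6) ∧ (y = 0 ∨ y = 3 ∨ y = 6) := by decide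
  have h4 : ((c^2 - c*d + d^2 : ℤ) : ZMod 9) = 0 := by
    exact_mod_cast (ZMod.intCast_zmod_eq_zero_iff_dvd _ 9).mpr h
  have h4' : ((c : ZMod 9))^2 - (c:ZMod 9)*(d:ZMod 9) + (d:ZMod 9)^2 = 0 := by
    push_cast at h4; exact h4
  obtain ⟨hc, hd⟩ := key _ _ h4'
  have tr : ∀ e : ℤ, ∀ k : ℤ, (e : ZMod 9) = ((k:ℤ) : ZMod 9) → e % 9 = k % 9 := by
    intro e k hk
    have := (ZMod.intCast_eq_intCast_iff' _ _ _).mp hk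
    simpa [Int.ModEq] using this
  constructor
  · rcases hc with h' | h' | h'
    · have := tr c 0 (by exact_mod_cast h'); omega
    · have := tr c 3 (by exact_mod_cast h'); omega
    · have := tr c 6 (by exact_mod_cast h'); omega
  · rcases hd with h' | h' | h'
    · have := tr d 0 (by exact_mod_cast h'); omega
    · have := tr d 3 (by exact_mod_cast h'); omega
    · have := tr d 6 (by exact_mod_cast h'); omega

lemma extract (ω : ℂ) (hω : IsPrimitiveRoot ω 3) {n : ℕ} (hn : n = 2 ∨ n = 3)
    {c d : ℤ} {w : ℂ} (hw : w ∈ Algebra.adjoin ℤ {ω})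
    (h : (c : ℂ) + (d : ℂ) * ω = (n : ℂ) * w) : (n:ℤ) ∣ c ∧ (n:ℤ) ∣ d := by
  have hnn : (n:ℂ) ≠ 0 := by rcases hn with rfl | rfl <;> norm_num
  have hconj : (c : ℂ) + (d : ℂ) * (-1 - ω) = (n : ℂ) * (starRingEnd ℂ) w := by
    have := congrArg (starRingEnd ℂ) h
    simpa [map_add, map_mul, omega_conj ω hω] using this
  have hprod : ((c^2 - c*d + d^2 : ℤ) : ℂ) = (n:ℂ)^2 * (w * (starRingEnd ℂ) w) := by
    have := congrArg₂ (· * ·) h hconj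
    push_cast
    have hsq : ω^2 = -1 - ω := by linear_combination omega_sq ω hω
    linear_combination this + (d:ℂ)^2 * hsq
  have hint : IsIntegral ℤ (w * (starRingEnd ℂ) w) := by
    have h1 := mem_adjoin_integral ω hω hw
    exact h1.mul (h1.map ((starRingEnd ℂ).toIntAlgHom))
  set q : ℚ := (c^2 - c*d + d^2 : ℤ) / (n:ℚ)^2 with hq
  have hqc : (q : ℂ) = w * (starRingEnd ℂ) w := by
    rw [hq]
    push_cast
    field_simp
    push_cast at hprod
    linear_combination hprod
  obtain ⟨z, hz⟩ := rat_integral_int (by rw [hqc]; exact hint)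
  have hdvd : ((n:ℤ))^2 ∣ c^2 - c*d + d^2 := by
    refine ⟨z, ?_⟩
    have hqn : (n:ℚ) ≠ 0 := by rcases hn with rfl | rfl <;> norm_num
    have : ((c^2 - c*d + d^2 : ℤ) : ℚ) = ((n:ℚ))^2 * z := by
      rw [hz, hq]
      field_simp
    exact_mod_cast this
  rcases hn with rfl | rfl
  · exact mod4_lemma c d (by exact_mod_cast hdvd)
  · exact mod9_lemma c d (by exact_mod_cast hdvd)

lemma two_ne_zero_zmod (p : ℕ) [hpf : Fact p.Prime] (hp2 : p ≠ 2) : (2 : ZMod p) ≠ 0 := by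
  have : ((2:ℕ) : ZMod p) ≠ 0 := by
    rw [Ne, ZMod.natCast_eq_zero_iff]
    intro h
    have := Nat.le_of_dvd (by norm_num) h
    have := hpf.out.two_le
    omega
  exact_mod_cast this

lemma jacobi_pairing (p : ℕ) [hpf : Fact p.Prime] (hp2 : p ≠ 2)
    (χ : MulChar (ZMod p) ℂ) (hχ3 : χ^3 = 1) (ω : ℂ) (hω : IsPrimitiveRoot ω 3) :
    ∃ w ∈ Algebra.adjoin ℤ {ω}, jacobiSum χ χ = 2 * w + χ 2 := by
  have h2ne : (2 : ZMod p) ≠ 0 := two_ne_zero_zmod p hp2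
  set c : ZMod p := (2 : ZMod p)⁻¹ with hc
  have h2c : (2 : ZMod p) * c = 1 := mul_inv_cancel₀ h2ne
  have hcfix : 1 - c = c := by linear_combination -h2c
  have hfix_iff : ∀ x : ZMod p, 1 - x = x ↔ x = c := by
    intro x
    constructor
    · intro h
      have h2x : (2 : ZMod p) * x = 1 := by linear_combination -h
      have := h2x.trans h2c.symm
      exact mul_left_cancel₀ h2ne this
    · rintro rfl; exact hcfix
  classical
  set f : ZMod p → ℂ := fun x => χ x * χ (1 - x) with hf
  have hfsymm : ∀ x : ZMod p, f (1 - x) = f x := by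
    intro x; simp only [hf, sub_sub_cancel]; ring
  set s : Finset (ZMod p) := univ.filter (fun x => x.val < (1 - x).val) with hs
  set t : Finset (ZMod p) := univ.filter (fun x => (1 - x).val < x.val) with ht
  have hsplit : jacobiSum χ χ = ∑ x ∈ s, f x + (∑ x ∈ t, f x + f c) := by
    rw [jacobiSum, ← Finset.sum_filter_add_sum_filter_not univ (fun x => x.val < (1 - x).val) f]
    congr 1
    rw [← Finset.sum_filter_add_sum_filter_not
      (univ.filter (fun x => ¬ x.val < (1 - x).val)) (fun x => (1 - x).val < x.val) f]
    congr 1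
    · have heq : (univ.filter (fun x : ZMod p => ¬ x.val < (1 - x).val)).filter
          (fun x => (1 - x).val < x.val) = t := by
        rw [Finset.filter_filter]
        apply Finset.filter_congr
        intro x _
        constructor
        · rintro ⟨_, h⟩; exact h
        · intro h; exact ⟨by omega, h⟩
      rw [heq]
    · have heq : (univ.filter (fun x : ZMod p => ¬ x.val < (1 - x).val)).filter
          (fun x => ¬ (1 - x).val < x.val) = {c} := by
        rw [Finset.filter_filter]
        ext x
        simp only [Finset.mem_filter, Finset.mem_univ, true_and, Finset.mem_singleton]
        constructor
        · rintro ⟨h1, h2⟩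
          have hval : (1 - x).val = x.val := by omega
          have : (1 - x) = x := ZMod.val_injective p hval
          exact (hfix_iff x).mp this
        · rintro rfl
          rw [hcfix]
          omega
      rw [heq, Finset.sum_singleton]
  have hts : ∑ x ∈ t, f x = ∑ x ∈ s, f x := by
    apply Finset.sum_nbij' (i := fun x => 1 - x) (j := fun x => 1 - x)
    · intro a ha
      simp only [ht, hs, Finset.mem_filter, Finset.mem_univ, true_and] at ha ⊢
      rwa [sub_sub_cancel]
    · intro a ha
      simp only [ht, hs, Finset.mem_filter, Finset.mem_univ, true_and] at ha ⊢
      rwa [sub_sub_cancel]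
    · intro a _; exact sub_sub_cancel 1 a
    · intro a _; exact sub_sub_cancel 1 a
    · intro a _; exact (hfsymm a).symm
  have hchi2 : χ 2 * χ c = 1 := by rw [← map_mul, h2c, map_one]
  have hchi23 : χ 2 ^ 3 = 1 := by
    have := MulChar.pow_apply' χ (by norm_num : (3:ℕ) ≠ 0) 2
    rw [hχ3] at this
    rw [← this, MulChar.one_apply (h2ne.isUnit)]
  have hfc : f c = χ 2 := by
    have hcval : f c = χ c ^ 2 := by simp only [hf, hcfix]; ring
    have hsq : χ c ^ 2 * χ 2 ^ 2 = 1 := by rw [← mul_pow, mul_comm, hchi2, one_pow]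
    have h2 : χ c ^ 2 = χ 2 :=
      calc χ c ^ 2 = χ c ^ 2 * (χ 2 ^ 2 * χ 2) := by rw [← pow_succ, hchi23, mul_one]
      _ = (χ c ^ 2 * χ 2 ^ 2) * χ 2 := by ring
      _ = χ 2 := by rw [hsq, one_mul]
    rw [hcval, h2]
  refine ⟨∑ x ∈ s, f x, ?_, ?_⟩
  · apply Subalgebra.sum_mem
    intro x _
    exact Subalgebra.mul_mem _
      (MulChar.apply_mem_algebraAdjoin_of_pow_eq_one hχ3 hω x)
      (MulChar.apply_mem_algebraAdjoin_of_pow_eq_one hχ3 hω (1 - x))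
  · rw [hsplit, hts, hfc]; ring

lemma jacobi_norm (p : ℕ) [hpf : Fact p.Prime]
    (χ : MulChar (ZMod p) ℂ) (hord : orderOf χ = 3) :
    jacobiSum χ χ * (starRingEnd ℂ) (jacobiSum χ χ) = (p : ℂ) := by
  have hχ1 : χ ≠ 1 := by
    intro h; rw [h, orderOf_one] at hord; omega
  have hχχ : χ * χ ≠ 1 := by
    have : χ * χ = χ ^ 2 := (sq χ).symm
    rw [this]
    exact pow_ne_one_of_lt_orderOf (by norm_num) (by omega)
  have hconj : (starRingEnd ℂ) (jacobiSum χ χ) = jacobiSum χ⁻¹ χ⁻¹ := by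
    rw [jacobiSum, jacobiSum, map_sum]
    apply Finset.sum_congr rfl
    intro x _
    simp only [map_mul, starRingEnd_apply, MulChar.star_apply']
  rw [hconj]
  have h := jacobiSum_mul_jacobiSum_inv (F := ZMod p) (F' := ℂ)
    (by rw [ringChar.eq_zero, ZMod.ringChar_zmod_n]; exact fun h => hpf.out.ne_zero h.symm)
    hχ1 hχ1 hχχ
  rw [h, ZMod.card]

lemma cube_iff (p : ℕ) [hpf : Fact p.Prime] (hp2 : p ≠ 2) (h3 : 3 ∣ p - 1)
    (χ : MulChar (ZMod p) ℂ) (hord : orderOf χ = 3) :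
    (∃ y : ZMod p, y ^ 3 = 2) ↔ χ 2 = 1 := by
  have h2ne : (2 : ZMod p) ≠ 0 := two_ne_zero_zmod p hp2
  have hχ3 : χ ^ 3 = 1 := hord ▸ pow_orderOf_eq_one χ
  obtain ⟨g, hg⟩ := IsCyclic.exists_generator (α := (ZMod p)ˣ)
  have hcard : orderOf g = p - 1 := by
    rw [orderOf_eq_card_of_forall_mem_zpowers hg, Nat.card_eq_fintype_card,
      ZMod.card_units_eq_totient, Nat.totient_prime hpf.out]
  set u : (ZMod p)ˣ := Units.mk0 (2 : ZMod p) h2ne with hu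
  obtain ⟨k, hk⟩ : ∃ k : ℕ, g ^ k = u := by
    have := hg u
    rwa [← mem_powers_iff_mem_zpowers, Submonoid.mem_powers_iff] at this
  have hχg3 : (χ g.val) ^ 3 = 1 := by
    have := MulChar.pow_apply' χ (by norm_num : (3:ℕ) ≠ 0) g.val
    rw [hχ3] at this
    rw [← this, MulChar.one_apply g.isUnit]
  have hχgne : χ g.val ≠ 1 := by
    intro h
    have : χ = 1 := by
      rw [MulChar.eq_iff hg]
      rw [h, MulChar.one_apply g.isUnit]
    rw [this, orderOf_one] at hord
    omega
  have hordχg : orderOf (χ g.val) = 3 := by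
    have hdvd := orderOf_dvd_of_pow_eq_one hχg3
    rcases Nat.prime_three.eq_one_or_self_of_dvd _ hdvd with h | h
    · exact absurd (orderOf_eq_one_iff.mp h) hχgne
    · exact h
  have hχ2pow : χ 2 = (χ g.val) ^ k := by
    have : ((g ^ k : (ZMod p)ˣ) : ZMod p) = (2 : ZMod p) := by rw [hk]; rfl
    rw [← this, Units.val_pow_eq_pow_val, map_pow]
  have hiff2 : χ 2 = 1 ↔ 3 ∣ k := by
    rw [hχ2pow, ← hordχg]
    exact (orderOf_dvd_iff_pow_eq_one).symm
  rw [hiff2]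
  constructor
  · rintro ⟨y, hy⟩
    have hyne : y ≠ 0 := by
      intro h; rw [h] at hy; simp at hy; exact h2ne hy.symm
    set v : (ZMod p)ˣ := Units.mk0 y hyne with hv
    obtain ⟨m, hm⟩ : ∃ m : ℕ, g ^ m = v := by
      have := hg v
      rwa [← mem_powers_iff_mem_zpowers, Submonoid.mem_powers_iff] at this
    have hv3 : v ^ 3 = u := by
      ext
      rw [Units.val_pow_eq_pow_val]
      simpa [hv, hu] using hy
    have : g ^ (3 * m) = g ^ k := by
      rw [mul_comm, pow_mul, hm, hv3, hk]
    have hmod := pow_eq_pow_iff_modEq.mp this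
    rw [hcard] at hmod
    have hdvd2 : ((p - 1 : ℕ) : ℤ) ∣ ((3 * m : ℕ) : ℤ) - (k : ℤ) := Nat.modEq_iff_dvd.mp hmod.symm
    have h3dvd : (3 : ℤ) ∣ ((3 * m : ℕ) : ℤ) - (k : ℤ) := by
      refine dvd_trans ?_ hdvd2
      exact_mod_cast h3
    have : (3 : ℤ) ∣ (k : ℤ) := by
      have h33 : (3:ℤ) ∣ ((3 * m : ℕ) : ℤ) := by push_cast; exact ⟨m, rfl⟩
      omega
    exact_mod_cast this
  · rintro ⟨m, rfl⟩
    refine ⟨((g ^ m : (ZMod p)ˣ) : ZMod p), ?_⟩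
    rw [← Units.val_pow_eq_pow_val, ← pow_mul, mul_comm m 3, hk]
    rfl

lemma rep_unique (p : ℕ) (hp : p.Prime) (A B C D : ℤ)
    (h1 : 4 * (p:ℤ) = A^2 + 27*B^2) (h2 : 4 * (p:ℤ) = C^2 + 27*D^2) : B^2 = D^2 := by
  have hppos : (0:ℤ) < p := by exact_mod_cast hp.pos
  have key : (A*D - B*C) * (A*D + B*C) = 4*(p:ℤ)*(D^2 - B^2) := by
    linear_combination B^2 * h2 - D^2 * h1
  have hid1 : 16*(p:ℤ)^2 = (A*C - 27*B*D)^2 + 27*(A*D + B*C)^2 := by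
    linear_combination (C^2 + 27*D^2) * h1 + (4*(p:ℤ)) * h2
  have hid2 : 16*(p:ℤ)^2 = (A*C + 27*B*D)^2 + 27*(A*D - B*C)^2 := by
    linear_combination (C^2 + 27*D^2) * h1 + (4*(p:ℤ)) * h2
  have hb1 : (A*D + B*C)^2 < (p:ℤ)^2 := by nlinarith [sq_nonneg (A*C - 27*B*D)]
  have hb2 : (A*D - B*C)^2 < (p:ℤ)^2 := by nlinarith [sq_nonneg (A*C + 27*B*D)]
  have hpdvd : (p:ℤ) ∣ (A*D - B*C) * (A*D + B*C) := by
    rw [key]; exact ⟨4 * (D^2 - B^2), by ring⟩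
  have hzero : ∀ x : ℤ, (p:ℤ) ∣ x → x^2 < (p:ℤ)^2 → x = 0 := by
    intro x hdvd hlt
    by_contra hne
    have h1' : (p:ℤ) ≤ |x| := Int.le_of_dvd (abs_pos.mpr hne) ((dvd_abs _ _).mpr hdvd)
    nlinarith [abs_nonneg x, _root_.sq_abs x]
  rcases (Nat.prime_iff_prime_int.mp hp).dvd_mul.mp hpdvd with h | h
  · have := hzero _ h hb2
    rw [this, zero_mul] at key
    nlinarith
  · have := hzero _ h hb1
    rw [this, mul_zero] at key
    nlinarith

end CubicTwoAux

open CubicTwoAux in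
theorem cubic_character_of_two (p : ℕ) (hp : p.Prime) (h3 : p % 3 = 1) :
    (∃ x : ℤ, x ^ 3 ≡ 2 [ZMOD p]) ↔ ∃ C D : ℤ, (p : ℤ) = C ^ 2 + 27 * D ^ 2 := by
  haveI hpf : Fact p.Prime := ⟨hp⟩
  have hple := hp.two_le
  have hp2 : p ≠ 2 := by omega
  have h31 : 3 ∣ p - 1 := by omega
  obtain ⟨ω, hω⟩ : ∃ ω : ℂ, IsPrimitiveRoot ω 3 :=
    ⟨_, Complex.isPrimitiveRoot_exp 3 (by norm_num)⟩
  have hsqω : ω^2 = -1 - ω := by linear_combination omega_sq ω hω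
  have hcard : Fintype.card (ZMod p) = p := ZMod.card p
  obtain ⟨χ, hord⟩ := MulChar.exists_mulChar_orderOf (ZMod p) (by rw [hcard]; exact h31) hω
  have hχ3 : χ ^ 3 = 1 := hord ▸ pow_orderOf_eq_one χ
  have hJmem : jacobiSum χ χ ∈ Algebra.adjoin ℤ {ω} :=
    jacobiSum_mem_algebraAdjoin_of_pow_eq_one hχ3 hχ3 hω
  obtain ⟨a, b, hJ⟩ := adjoin_coords ω hω hJmem
  -- the norm equation p = a² - ab + b²
  have hnorm : (p : ℤ) = a^2 - a*b + b^2 := by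
    have h := jacobi_norm p χ hord
    rw [hJ] at h
    have hcω : (starRingEnd ℂ) ((a:ℂ) + (b:ℂ)*ω) = (a:ℂ) + (b:ℂ)*(-1-ω) := by
      rw [map_add, map_mul, omega_conj ω hω]
      simp
    rw [hcω] at h
    have : ((a^2 - a*b + b^2 : ℤ) : ℂ) = ((p:ℤ) : ℂ) := by
      push_cast
      linear_combination h + (b:ℂ)^2 * hsqω
    exact_mod_cast this.symm
  -- 3 ∣ b (and 3 ∣ a + 1)
  obtain ⟨z, hzmem, hzeq⟩ := exists_jacobiSum_eq_neg_one_add (by norm_num : (2:ℕ) < 3)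
    hχ3 hχ3 (by rw [hcard]; exact h31) hω
  rw [hJ] at hzeq
  have h3div : (3:ℤ) ∣ (a+1) ∧ (3:ℤ) ∣ b := by
    refine extract ω hω (Or.inr rfl) (c := a+1) (d := b) (w := -(z*ω)) ?_ ?_
    · exact Subalgebra.neg_mem _ (Subalgebra.mul_mem _ hzmem
        (Algebra.self_mem_adjoin_singleton ℤ ω))
    · push_cast
      linear_combination hzeq + z * (omega_sq ω hω)
  -- the pairing congruence
  obtain ⟨w, hwmem, hweq⟩ := jacobi_pairing p hp2 χ hχ3 ω hω
  rw [hJ] at hweq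
  have h2ne : (2 : ZMod p) ≠ 0 := two_ne_zero_zmod p hp2
  -- solvability transfer
  have hsol : (∃ x : ℤ, x ^ 3 ≡ 2 [ZMOD p]) ↔ (∃ y : ZMod p, y^3 = 2) := by
    constructor
    · rintro ⟨x, hx⟩
      refine ⟨(x : ZMod p), ?_⟩
      have := (ZMod.intCast_eq_intCast_iff _ _ _).mpr hx
      push_cast at this
      exact_mod_cast this
    · rintro ⟨y, hy⟩
      refine ⟨(y.val : ℤ), (ZMod.intCast_eq_intCast_iff _ _ _).mp ?_⟩
      push_cast
      rw [ZMod.natCast_rightInverse y]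
      exact_mod_cast hy
  -- "b odd" is impossible when p = C² + 27 D²
  have hbodd_contra : ∀ C D : ℤ, (p : ℤ) = C ^ 2 + 27 * D ^ 2 → ¬ (2 ∣ b - 1) := by
    intro C D hCD hdvd
    obtain ⟨m, hm⟩ := h3div.2
    have h4p1 : 4 * (p:ℤ) = (2*a - b)^2 + 27*m^2 := by
      rw [hnorm, hm]; ring
    have h4p2 : 4 * (p:ℤ) = (2*C)^2 + 27*(2*D)^2 := by rw [hCD]; ring
    have := rep_unique p hp _ _ _ _ h4p1 h4p2
    -- m² = (2D)², but m is odd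
    have hmodd : m % 2 = 1 := by omega
    have : m^2 = 4 * D^2 := by linarith [this]
    have h1 : m^2 % 2 = 1 := by
      rcases Int.even_or_odd m with he | ho
      · exfalso; rcases he with ⟨r, hr⟩; omega
      · rcases ho with ⟨r, hr⟩
        have : m^2 = 2*(2*r^2+2*r) + 1 := by rw [hr]; ring
        omega
    omega
  constructor
  · intro hsolv
    have hχ2one : χ 2 = 1 := (cube_iff p hp2 h31 χ hord).mp (hsol.mp hsolv)
    rw [hχ2one] at hweq
    have h2div : (2:ℤ) ∣ (a-1) ∧ (2:ℤ) ∣ b := by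
      refine extract ω hω (Or.inl rfl) (c := a-1) (d := b) (w := w) hwmem ?_
      push_cast
      linear_combination hweq
    obtain ⟨D, hD⟩ : ∃ D : ℤ, b = 6 * D := by
      obtain ⟨r, hr⟩ := h2div.2
      obtain ⟨s, hs⟩ := h3div.2
      exact ⟨b / 6, by omega⟩
    refine ⟨a - 3*D, D, ?_⟩
    rw [hnorm, hD]; ring
  · rintro ⟨C, D, hCD⟩
    refine hsol.mpr ((cube_iff p hp2 h31 χ hord).mpr ?_)
    obtain ⟨k, hk3, hχ2⟩ := MulChar.exists_apply_eq_pow hχ3 hω h2ne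
    interval_cases k
    · simpa using hχ2
    · exfalso
      rw [pow_one] at hχ2
      rw [hχ2] at hweq
      have h2div : (2:ℤ) ∣ a ∧ (2:ℤ) ∣ (b-1) := by
        refine extract ω hω (Or.inl rfl) (c := a) (d := b-1) (w := w) hwmem ?_
        push_cast
        linear_combination hweq
      exact hbodd_contra C D hCD h2div.2
    · exfalso
      rw [hχ2, hsqω] at hweq
      have h2div : (2:ℤ) ∣ (a+1) ∧ (2:ℤ) ∣ (b+1) := by
        refine extract ω hω (Or.inl rfl) (c := a+1) (d := b+1) (w := w) hwmem ?_
        push_cast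
        linear_combination hweq
      have : (2:ℤ) ∣ b - 1 := by
        obtain ⟨r, hr⟩ := h2div.2; exact ⟨r - 1, by omega⟩
      exact hbodd_contra C D hCD this
end
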